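/- The minimum length of a covering strategy for a tree T with k robots at given starting positions equals the minimum over all k-tuples of paths (P_1,...,P_k) in T (with P_i starting at robot i's starting vertex) of Σ_i l(P_i) + 2·|V(T) \ ∪_i V(P_i)|. -/

import Mathlib

/-!
Fix a walk `W` in a tree from `u` to `v` and let `P` be the `u`–`v` path. Deleting an edge splits
the tree in two, and `W` moves along that edge an odd or an even number of times according as `u`
and `v` lie on different sides or on the same side. Hence `W` uses every edge of `P`, and for each
vertex `x` it visits off `P` it uses the edge leading from `x` towards `u` at least twice; these
edges are distinct, so `l(W) ≥ l(P) + 2 |V(W) ∖ V(P)|`. Summing over the robots bounds every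
covering strategy from below, because a vertex on none of the paths is visited by some walk.
Conversely, a tuple of paths becomes a covering strategy by repeatedly inserting a detour
`z → w → z` to an unvisited neighbour `w` of a visited vertex `z`, at a cost of 2 each.
-/

open Finset

variable {V : Type*}

/-- The list of consecutive steps of a walk given as a list of vertices. -/
def wsteps (W : List V) : List (V × V) := W.zip W.tail

/-- A walk on a graph: a nonempty list of vertices in which consecutive
entries are equal or adjacent. -/
def IsWalk (G : SimpleGraph V) (W : List V) : Prop :=
  W ≠ [] ∧ ∀ p ∈ wsteps W, p.1 = p.2 ∨ G.Adj p.1 p.2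

/-- The length of a walk: the number of position-changing moves. -/
def wlen [DecidableEq V] (W : List V) : ℕ :=
  (wsteps W).countP (fun p => decide (p.1 ≠ p.2))

/-- The number of times a walk traverses the edge `{x, y}` (in either direction). -/
def trav [DecidableEq V] (W : List V) (x y : V) : ℕ :=
  (wsteps W).countP (fun p => decide ((p.1 = x ∧ p.2 = y) ∨ (p.1 = y ∧ p.2 = x)))

/-- The number of times a walk traverses the edge `(x, y)` from `x` to `y`. -/
def dirTrav [DecidableEq V] (W : List V) (x y : V) : ℕ :=
  (wsteps W).countP (fun p => decide (p.1 = x ∧ p.2 = y))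

/-- A tuple of walks covers the graph: every vertex appears in some walk. -/
def Covers {k : ℕ} (S : Fin k → List V) : Prop := ∀ v : V, ∃ i, v ∈ S i

/-- The total length of a strategy: the sum of the lengths of the walks. -/
def slen [DecidableEq V] {k : ℕ} (S : Fin k → List V) : ℕ := ∑ i, wlen (S i)

/-- A minimum-length covering strategy: a tuple of walks covering all vertices whose
total length is no larger than that of any covering strategy with the same starts. -/
def IsMinCover [DecidableEq V] (G : SimpleGraph V) {k : ℕ} (S : Fin k → List V) : Prop :=
  (∀ i, IsWalk G (S i)) ∧ Covers S ∧
    ∀ S' : Fin k → List V, (∀ i, IsWalk G (S' i)) → Covers S' →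
      (∀ i, (S' i).head? = (S i).head?) → slen S ≤ slen S'

@[simp]
lemma wsteps_singleton (a : V) : wsteps [a] = [] := rfl

@[simp]
lemma wsteps_cons_cons (a b : V) (l : List V) :
    wsteps (a :: b :: l) = (a, b) :: wsteps (b :: l) := rfl

lemma mem_of_mem_wsteps {W : List V} {p : V × V} (hp : p ∈ wsteps W) : p.1 ∈ W ∧ p.2 ∈ W :=
  ⟨(List.of_mem_zip hp).1, List.mem_of_mem_tail (List.of_mem_zip hp).2⟩

lemma isChain_iff_forall_mem_wsteps {R : V → V → Prop} {W : List V} :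
    W.IsChain R ↔ ∀ p ∈ wsteps W, R p.1 p.2 := by
  induction W with
  | nil => simp [wsteps]
  | cons a t ih =>
    cases t with
    | nil => simp
    | cons b t => simp [ih]

lemma isWalk_iff_isChain {G : SimpleGraph V} {W : List V} :
    IsWalk G W ↔ W ≠ [] ∧ W.IsChain (fun a b => a = b ∨ G.Adj a b) := by
  rw [isChain_iff_forall_mem_wsteps]
  rfl

lemma isWalk_cons_cons {G : SimpleGraph V} {a b : V} {l : List V} :
    IsWalk G (a :: b :: l) ↔ (a = b ∨ G.Adj a b) ∧ IsWalk G (b :: l) := by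
  simp [isWalk_iff_isChain]

lemma IsWalk.of_isChain {G : SimpleGraph V} {W : List V} (hne : W ≠ []) (h : W.IsChain G.Adj) :
    IsWalk G W :=
  isWalk_iff_isChain.2 ⟨hne, h.imp fun _ _ => Or.inr⟩

section EdgeTraversals

variable [DecidableEq V]

def edgeTrav (W : List V) (e : Sym2 V) : ℕ :=
  (wsteps W).countP (fun p => decide (p.1 ≠ p.2 ∧ s(p.1, p.2) = e))

@[simp]
lemma edgeTrav_singleton (a : V) (e : Sym2 V) : edgeTrav [a] e = 0 := rfl

lemma edgeTrav_cons_cons (a b : V) (l : List V) (e : Sym2 V) :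
    edgeTrav (a :: b :: l) e = edgeTrav (b :: l) e + if a ≠ b ∧ s(a, b) = e then 1 else 0 := by
  simp [edgeTrav, List.countP_cons]

lemma wlen_eq_sum_edgeTrav [Fintype V] (W : List V) : wlen W = ∑ e, edgeTrav W e := by
  unfold wlen edgeTrav
  induction wsteps W with
  | nil => simp
  | cons p l ih =>
    simp only [List.countP_cons, ih, Finset.sum_add_distrib]
    by_cases hp : p.1 = p.2
    · simp [hp]
    · simp [hp, Finset.sum_ite_eq]

lemma edgeTrav_eq_zero_of_notMem {W : List V} {x : V} (hx : x ∉ W) (y : V) :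
    edgeTrav W s(x, y) = 0 := by
  refine List.countP_eq_zero.2 fun p hp h => ?_
  rcases Sym2.eq_iff.1 (of_decide_eq_true h).2 with ⟨rfl, -⟩ | ⟨-, rfl⟩
  exacts [hx (mem_of_mem_wsteps hp).1, hx (mem_of_mem_wsteps hp).2]

lemma edgeTrav_le_one_of_nodup {P : List V} (hP : P.Nodup) (e : Sym2 V) : edgeTrav P e ≤ 1 := by
  induction P with
  | nil => simp [edgeTrav, wsteps]
  | cons a t ih =>
    cases t with
    | nil => simp
    | cons b t =>
      rw [edgeTrav_cons_cons]
      split_ifs with h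
      · rw [← h.2, edgeTrav_eq_zero_of_notMem (List.nodup_cons.1 hP).1]
      · exact ih (List.nodup_cons.1 hP).2

lemma IsWalk.reachable_of_edgeTrav_eq_zero {G : SimpleGraph V} {W : List V} (hW : IsWalk G W)
    {e : Sym2 V} (h0 : edgeTrav W e = 0) {u z : V} (hu : W.head? = some u) (hz : z ∈ W) :
    (G.deleteEdges {e}).Reachable u z := by
  induction W generalizing u with
  | nil => simp at hu
  | cons a t ih =>
    obtain rfl : a = u := by simpa using hu
    cases t with
    | nil =>
      obtain rfl : z = a := by simpa using hz
      rfl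
    | cons b t =>
      rw [edgeTrav_cons_cons, Nat.add_eq_zero_iff, ite_eq_right_iff] at h0
      rw [isWalk_cons_cons] at hW
      have hab : (G.deleteEdges {e}).Reachable a b := by
        rcases hW.1 with rfl | hadj
        · rfl
        · exact (SimpleGraph.deleteEdges_adj.2 ⟨hadj, fun he => by
            simpa using h0.2 ⟨hadj.ne, he⟩⟩).reachable
      rcases List.mem_cons.1 hz with rfl | hz
      · rfl
      · exact hab.trans (ih hW.2 h0.1 rfl hz)

end EdgeTraversals

namespace SimpleGraph

variable {G : SimpleGraph V}

lemma IsAcyclic.not_reachable_deleteEdges (hT : G.IsAcyclic) {x y : V} (hxy : G.Adj x y) :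
    ¬ (G.deleteEdges {s(x, y)}).Reachable x y :=
  isBridge_iff.1 (isAcyclic_iff_forall_adj_isBridge.1 hT hxy)

lemma IsAcyclic.reachable_deleteEdges_iff_iff_of_adj (hT : G.IsAcyclic) {x y a b : V}
    (hxy : G.Adj x y) (hab : G.Adj a b) :
    (((G.deleteEdges {s(x, y)}).Reachable x a ↔ (G.deleteEdges {s(x, y)}).Reachable x b) ↔
      s(a, b) ≠ s(x, y)) := by
  by_cases he : s(a, b) = s(x, y)
  · have hxy' := hT.not_reachable_deleteEdges hxy
    rcases Sym2.eq_iff.1 he with ⟨rfl, rfl⟩ | ⟨rfl, rfl⟩ <;> simpa [he] using hxy'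
  · have hab' : (G.deleteEdges {s(x, y)}).Adj a b := deleteEdges_adj.2 ⟨hab, he⟩
    simpa [he] using ⟨fun h => h.trans hab'.reachable, fun h => h.trans hab'.symm.reachable⟩

lemma Preconnected.exists_adj_reachable_deleteEdges (hc : G.Preconnected) {x u : V}
    (hxu : x ≠ u) : ∃ z, G.Adj x z ∧ (G.deleteEdges {s(x, z)}).Reachable z u := by
  obtain ⟨p, hp⟩ := hc.exists_isPath x u
  cases p with
  | nil => exact absurd rfl hxu
  | cons h q =>
    refine ⟨_, h, reachable_deleteEdges_iff_exists_walk.2 ⟨q, fun he => ?_⟩⟩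
    exact ((Walk.cons_isPath_iff h q).1 hp).2 (q.fst_mem_support_of_mem_edges he)

lemma Reachable.exists_nodup_isChain {u v : V} (h : G.Reachable u v) :
    ∃ P : List V, P.Nodup ∧ P.IsChain G.Adj ∧ P.head? = some u ∧ P.getLast? = some v := by
  obtain ⟨p, hp⟩ := h.exists_isPath
  refine ⟨p.support, hp.support_nodup, p.isChain_adj_support, ?_, ?_⟩
  · rw [List.head?_eq_some_head p.support_ne_nil, Walk.head_support]
  · rw [List.getLast?_eq_some_getLast p.support_ne_nil, Walk.getLast_support]

section

variable [DecidableEq V]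

/-- The side of the cut at the tree edge `{x, y}` on which a vertex lies is recorded by whether
it is reachable from `x` once the edge is deleted. -/
lemma IsAcyclic.even_edgeTrav_iff (hT : G.IsAcyclic) {x y : V} (hxy : G.Adj x y) {W : List V}
    (hW : IsWalk G W) {u v : V} (hu : W.head? = some u) (hv : W.getLast? = some v) :
    Even (edgeTrav W s(x, y)) ↔
      ((G.deleteEdges {s(x, y)}).Reachable x u ↔ (G.deleteEdges {s(x, y)}).Reachable x v) := by
  induction W generalizing u with
  | nil => simp at hu
  | cons a t ih =>
    obtain rfl : a = u := by simpa using hu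
    cases t with
    | nil =>
      obtain rfl : a = v := by simpa using hv
      simp
    | cons b t =>
      rw [isWalk_cons_cons] at hW
      rw [List.getLast?_cons_cons] at hv
      have hrest := ih hW.2 rfl hv
      rw [edgeTrav_cons_cons]
      rcases hW.1 with rfl | hab
      · simpa using hrest
      · have hstep := hT.reachable_deleteEdges_iff_iff_of_adj hxy hab
        by_cases he : s(a, b) = s(x, y)
        · simp only [he, hab.ne, ne_eq, not_false_eq_true, and_self, if_true,
            Nat.even_add_one] at hstep ⊢
          tauto
        · simp only [he, and_false, if_false, add_zero]
          tauto

lemma IsAcyclic.even_edgeTrav_iff_even_edgeTrav (hT : G.IsAcyclic) {x y : V} (hxy : G.Adj x y)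
    {W W' : List V} (hW : IsWalk G W) (hW' : IsWalk G W') (hh : W.head? = W'.head?)
    (hl : W.getLast? = W'.getLast?) :
    Even (edgeTrav W s(x, y)) ↔ Even (edgeTrav W' s(x, y)) := by
  rw [hT.even_edgeTrav_iff hxy hW (List.head?_eq_some_head hW.1)
      (List.getLast?_eq_some_getLast hW.1),
    hT.even_edgeTrav_iff hxy hW' (hh ▸ List.head?_eq_some_head hW.1)
      (hl ▸ List.getLast?_eq_some_getLast hW.1)]

/-- A path uses each edge at most once, and a walk with the same endpoints uses every edge of
the path an odd number of times. -/
lemma IsAcyclic.edgeTrav_le_of_nodup (hT : G.IsAcyclic) {P W : List V} (hP : P.Nodup)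
    (hPW : IsWalk G P) (hPc : P.IsChain G.Adj) (hW : IsWalk G W) (hh : P.head? = W.head?)
    (hl : P.getLast? = W.getLast?) (e : Sym2 V) : edgeTrav P e ≤ edgeTrav W e := by
  rcases Nat.le_one_iff_eq_zero_or_eq_one.1 (edgeTrav_le_one_of_nodup hP e) with h | h
  · exact h ▸ Nat.zero_le _
  · obtain ⟨p, hp, hpe⟩ := List.countP_pos_iff.1 (h ▸ Nat.one_pos : 0 < edgeTrav P e)
    obtain ⟨-, rfl⟩ := of_decide_eq_true hpe
    have hodd := (hT.even_edgeTrav_iff_even_edgeTrav (isChain_iff_forall_mem_wsteps.1 hPc p hp)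
      hPW hW hh hl).not
    rw [h] at hodd ⊢
    exact Nat.one_le_iff_ne_zero.2 fun h0 => hodd.1 (by decide) (h0 ▸ Even.zero)

/-- The edge from a vertex `x` off the path towards the start `u` separates `x` from `u`: a walk
visiting `x` crosses it, and an even number of times since the path does not cross it. -/
lemma IsAcyclic.two_le_edgeTrav (hT : G.IsAcyclic) {P W : List V} (hPW : IsWalk G P)
    (hW : IsWalk G W) (hh : P.head? = W.head?) (hl : P.getLast? = W.getLast?) {x z u : V}
    (hxP : x ∉ P) (hxW : x ∈ W) (hxz : G.Adj x z)
    (hzu : (G.deleteEdges {s(x, z)}).Reachable z u) (hu : W.head? = some u) :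
    2 ≤ edgeTrav W s(x, z) := by
  have heven : Even (edgeTrav W s(x, z)) :=
    (hT.even_edgeTrav_iff_even_edgeTrav hxz hPW hW hh hl).1
      (edgeTrav_eq_zero_of_notMem hxP z ▸ Even.zero)
  have hne : edgeTrav W s(x, z) ≠ 0 := fun h0 => hT.not_reachable_deleteEdges hxz
    ((hW.reachable_of_edgeTrav_eq_zero h0 hu hxW).symm.trans hzu.symm)
  obtain ⟨m, hm⟩ := heven
  omega

variable [Fintype V]

lemma IsTree.wlen_add_two_mul_card_le (hT : G.IsTree) {P W : List V} (hP : P.Nodup)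
    (hPc : P.IsChain G.Adj) (hW : IsWalk G W) (hh : P.head? = W.head?)
    (hl : P.getLast? = W.getLast?) :
    wlen P + 2 * #{x | x ∈ W ∧ x ∉ P} ≤ wlen W := by
  have hPW : IsWalk G P :=
    IsWalk.of_isChain (by rintro rfl; exact hW.1 (List.head?_eq_none_iff.1 hh.symm)) hPc
  have hu : W.head? = some (W.head hW.1) := List.head?_eq_some_head hW.1
  have huP : W.head hW.1 ∈ P := List.mem_of_head? (hh.trans hu)
  have hparent :
      ∀ x ∉ P, ∃ z, G.Adj x z ∧ (G.deleteEdges {s(x, z)}).Reachable z (W.head hW.1) :=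
    fun x hx => hT.connected.preconnected.exists_adj_reachable_deleteEdges fun h => hx (h ▸ huP)
  choose! par hadj hreach using hparent
  set D : Finset V := {x | x ∈ W ∧ x ∉ P}
  have hinj : Set.InjOn (fun x => s(x, par x)) D := by
    intro x hx y hy hxy
    rcases Sym2.eq_iff.1 hxy with ⟨h, -⟩ | ⟨hxy, hyx⟩
    · exact h
    · have hx' := (mem_filter.1 hx).2.2
      have hy' := (mem_filter.1 hy).2.2
      have hxu := hreach y hy'
      have hyu := hreach x hx'
      have hadj' := hadj x hx'
      rw [← hxy, Sym2.eq_swap] at hxu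
      rw [hyx] at hyu hadj'
      exact absurd (hxu.trans hyu.symm) (hT.isAcyclic.not_reachable_deleteEdges hadj')
  calc wlen P + 2 * #D
      = ∑ e, (edgeTrav P e + if e ∈ D.image (fun x => s(x, par x)) then 2 else 0) := by
        rw [sum_add_distrib, ← wlen_eq_sum_edgeTrav, sum_ite_mem, univ_inter, sum_const,
          card_image_of_injOn hinj, smul_eq_mul, mul_comm]
    _ ≤ ∑ e, edgeTrav W e := sum_le_sum fun e _ => ?_
    _ = wlen W := (wlen_eq_sum_edgeTrav W).symm
  split_ifs with he
  · obtain ⟨x, hx, rfl⟩ := mem_image.1 he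
    obtain ⟨hxW, hxP⟩ := (mem_filter.1 hx).2
    rw [edgeTrav_eq_zero_of_notMem hxP, zero_add]
    exact hT.isAcyclic.two_le_edgeTrav hPW hW hh hl hxP hxW (hadj x hxP) (hreach x hxP) hu
  · exact hT.isAcyclic.edgeTrav_le_of_nodup hP hPW hPc hW hh hl e

lemma IsTree.exists_nodup_wlen_add_le (hT : G.IsTree) {W : List V} (hW : IsWalk G W) :
    ∃ P : List V, P.Nodup ∧ P.IsChain G.Adj ∧ P.head? = W.head? ∧
      wlen P + 2 * #{x | x ∈ W ∧ x ∉ P} ≤ wlen W := by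
  obtain ⟨P, hP, hPc, hh, hl⟩ :=
    (hT.connected.preconnected (W.head hW.1) (W.getLast hW.1)).exists_nodup_isChain
  rw [← List.head?_eq_some_head hW.1] at hh
  rw [← List.getLast?_eq_some_getLast hW.1] at hl
  exact ⟨P, hP, hPc, hh, hT.wlen_add_two_mul_card_le hP hPc hW hh hl⟩

end

end SimpleGraph

lemma wsteps_append_cons (A : List V) (z : V) (B : List V) :
    wsteps (A ++ z :: B) = wsteps (A ++ [z]) ++ wsteps (z :: B) := by
  induction A with
  | nil => simp
  | cons a A ih =>
    cases A with
    | nil => simp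
    | cons b A => simpa using ih

lemma wlen_append_cons [DecidableEq V] (A : List V) (z : V) (B : List V) :
    wlen (A ++ z :: B) = wlen (A ++ [z]) + wlen (z :: B) := by
  rw [wlen, wsteps_append_cons, List.countP_append, wlen, wlen]

lemma wlen_detour [DecidableEq V] (A : List V) {z w : V} (hzw : z ≠ w) (B : List V) :
    wlen (A ++ z :: w :: z :: B) = wlen (A ++ z :: B) + 2 := by
  rw [wlen_append_cons A z, wlen_append_cons A z B]
  simp [wlen, hzw, hzw.symm]
  omega

lemma IsWalk.detour {G : SimpleGraph V} {A B : List V} {z w : V} (hW : IsWalk G (A ++ z :: B))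
    (hzw : G.Adj z w) : IsWalk G (A ++ z :: w :: z :: B) := by
  rw [isWalk_iff_isChain, List.isChain_split] at hW ⊢
  simp only [List.isChain_cons_cons] at hW ⊢
  exact ⟨by simp, hW.2.1, Or.inr hzw, Or.inr hzw.symm, hW.2.2⟩

lemma slen_update_add [DecidableEq V] {k : ℕ} (S : Fin k → List V) (i : Fin k) (W : List V) :
    slen (Function.update S i W) + wlen (S i) = slen S + wlen W := by
  simp only [slen, Function.apply_update (fun _ => wlen),
    sum_update_of_mem (mem_univ i), ← add_sum_erase _ _ (mem_univ i), sdiff_singleton_eq_erase]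
  ring

section Strategies

variable [Fintype V] [DecidableEq V] {k : ℕ}

def uncovered (S : Fin k → List V) : Finset V := {v | ∀ i, v ∉ S i}

lemma covers_iff_uncovered_eq_empty {S : Fin k → List V} : Covers S ↔ uncovered S = ∅ := by
  simp [Covers, uncovered, Finset.eq_empty_iff_forall_notMem]

lemma SimpleGraph.IsTree.exists_paths_le_slen {G : SimpleGraph V} (hT : G.IsTree)
    {S : Fin k → List V} (hS : ∀ i, IsWalk G (S i)) (hC : Covers S) :
    ∃ P : Fin k → List V,
      (∀ i, (P i).Nodup ∧ (P i).IsChain G.Adj ∧ (P i).head? = (S i).head?) ∧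
      ∑ i, wlen (P i) + 2 * #(uncovered P) ≤ slen S := by
  choose P hP hPc hPh hle using fun i => hT.exists_nodup_wlen_add_le (hS i)
  refine ⟨P, fun i => ⟨hP i, hPc i, hPh i⟩, ?_⟩
  have hsub : uncovered P ⊆ univ.biUnion fun i => {x | x ∈ S i ∧ x ∉ P i} := by
    intro x hx
    obtain ⟨i, hi⟩ := hC x
    simp only [uncovered, mem_filter, mem_univ, true_and] at hx
    simpa using ⟨i, hi, hx i⟩
  calc ∑ i, wlen (P i) + 2 * #(uncovered P)
      ≤ ∑ i, wlen (P i) + 2 * ∑ i, #{x | x ∈ S i ∧ x ∉ P i} := by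
        gcongr
        exact (card_le_card hsub).trans card_biUnion_le
    _ = ∑ i, (wlen (P i) + 2 * #{x | x ∈ S i ∧ x ∉ P i}) := by
        rw [sum_add_distrib, mul_sum]
    _ ≤ slen S := sum_le_sum fun i _ => hle i

lemma SimpleGraph.Preconnected.exists_detour {G : SimpleGraph V} (hc : G.Preconnected)
    (i₀ : Fin k) {S : Fin k → List V} (hS : ∀ i, IsWalk G (S i))
    (hne : (uncovered S).Nonempty) :
    ∃ w ∈ uncovered S, ∃ S' : Fin k → List V, (∀ i, IsWalk G (S' i)) ∧
      (∀ i, (S' i).head? = (S i).head?) ∧ slen S' = slen S + 2 ∧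
      uncovered S' = (uncovered S).erase w := by
  obtain ⟨v, hv⟩ := hne
  obtain ⟨c, hc₀⟩ := List.exists_mem_of_ne_nil _ (hS i₀).1
  obtain ⟨⟨⟨z, w⟩, hzw⟩, -, ⟨i, hz⟩, hw⟩ := (hc c v).some.exists_boundary_dart
    {x | ∃ i, x ∈ S i} ⟨i₀, hc₀⟩ (by simpa [uncovered] using hv)
  obtain ⟨A, B, hAB⟩ := List.append_of_mem hz
  have hmem : ∀ j x, x ∈ Function.update S i (A ++ z :: w :: z :: B) j ↔
      x ∈ S j ∨ j = i ∧ x = w := by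
    intro j x
    rcases eq_or_ne j i with rfl | hj
    · simp only [Function.update_self, hAB, List.mem_append, List.mem_cons]
      tauto
    · simp [hj]
  refine ⟨w, by simpa [uncovered] using hw, Function.update S i (A ++ z :: w :: z :: B),
    fun j => ?_, fun j => ?_, ?_, ?_⟩
  · rcases eq_or_ne j i with rfl | hj
    · simpa using (hAB ▸ hS j).detour hzw
    · simpa [hj] using hS j
  · rcases eq_or_ne j i with rfl | hj
    · cases A <;> simp [hAB]
    · simp [hj]
  · have := slen_update_add S i (A ++ z :: w :: z :: B)
    rw [wlen_detour A hzw.ne, ← hAB] at this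
    omega
  · ext x
    simp only [uncovered, mem_filter, mem_univ, true_and, mem_erase, hmem]
    grind

lemma SimpleGraph.Preconnected.exists_covers_slen_eq {G : SimpleGraph V} (hc : G.Preconnected)
    (i₀ : Fin k) {S : Fin k → List V} (hS : ∀ i, IsWalk G (S i)) :
    ∃ S' : Fin k → List V, (∀ i, IsWalk G (S' i)) ∧ Covers S' ∧
      (∀ i, (S' i).head? = (S i).head?) ∧ slen S' = slen S + 2 * #(uncovered S) := by
  induction hn : #(uncovered S) generalizing S with
  | zero =>
    exact ⟨S, hS, covers_iff_uncovered_eq_empty.2 (card_eq_zero.1 hn), fun _ => rfl, rfl⟩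
  | succ n ih =>
    obtain ⟨w, hw, S₁, hS₁, hh₁, hl₁, hu₁⟩ :=
      hc.exists_detour i₀ hS (card_pos.1 (by omega))
    obtain ⟨S', hS', hC', hh', hl'⟩ :=
      ih hS₁ (by rw [hu₁, card_erase_of_mem hw, hn, Nat.add_sub_cancel])
    exact ⟨S', hS', hC', fun i => (hh' i).trans (hh₁ i), by rw [hl', hl₁]; ring⟩

end Strategies

lemma Nat.sInf_eq_sInf_of_subset_of_forall_exists_le {A B : Set ℕ} (hBA : B ⊆ A)
    (h : ∀ a ∈ A, ∃ b ∈ B, b ≤ a) : sInf A = sInf B := by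
  rcases B.eq_empty_or_nonempty with rfl | hB
  · obtain rfl : A = ∅ := Set.eq_empty_of_forall_notMem fun a ha => by simpa using h a ha
    rfl
  · refine le_antisymm (Nat.sInf_le (hBA (Nat.sInf_mem hB))) ?_
    obtain ⟨b, hb, hle⟩ := h _ (Nat.sInf_mem (hB.mono hBA))
    exact (Nat.sInf_le hb).trans hle

/-- The minimum length of a covering strategy with k robots at given starts equals
the minimum over all k-tuples of paths with these starts of
Σ l(Pᵢ) + 2·|V(T) ∖ ∪ V(Pᵢ)|. -/
theorem stmt8 {V : Type*} [Fintype V] [DecidableEq V] (G : SimpleGraph V) (hT : G.IsTree)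
    {k : ℕ} (hk : 1 ≤ k) (start : Fin k → V) :
    sInf {L : ℕ | ∃ S : Fin k → List V, (∀ i, IsWalk G (S i)) ∧ Covers S ∧
        (∀ i, (S i).head? = some (start i)) ∧ slen S = L} =
    sInf {L : ℕ | ∃ P : Fin k → List V,
        (∀ i, (P i).Nodup ∧ (P i).Chain' G.Adj ∧ (P i).head? = some (start i)) ∧
        (∑ i, wlen (P i)) +
          2 * (Finset.univ.filter (fun v : V => ∀ i, v ∉ P i)).card = L} := by
  apply Nat.sInf_eq_sInf_of_subset_of_forall_exists_le
  · rintro _ ⟨P, hP, rfl⟩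
    have hPW : ∀ i, IsWalk G (P i) := fun i =>
      IsWalk.of_isChain (by rintro h; simpa [h] using (hP i).2.2) (hP i).2.1
    obtain ⟨S, hS, hC, hh, hl⟩ :=
      hT.connected.preconnected.exists_covers_slen_eq ⟨0, hk⟩ hPW
    exact ⟨S, hS, hC, fun i => (hh i).trans (hP i).2.2, hl⟩
  · rintro _ ⟨S, hS, hC, hh, rfl⟩
    obtain ⟨P, hP, hle⟩ := hT.exists_paths_le_slen hS hC
    exact ⟨_, ⟨P, fun i => ⟨(hP i).1, (hP i).2.1, (hP i).2.2.trans (hh i)⟩, rfl⟩, hle⟩
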